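/- arXiv:2403.09297 — 2 statements merged into one kernel-verified Lean document; each statement's English description precedes it below -/
import Mathlib

section
/- Let c be a nonempty subset of ℝ^n such that c* is nonempty. Then the double dual c** equals the affine span of c (as a subset of ℝ^n). -/
open Finset

def dualSet {n : ℕ} (c : Set (Fin n → ℝ)) : Set (Fin n → ℝ) :=
  {π | ∀ ρ ∈ c, (∑ i, π i * ρ i) = 1}

theorem double_dual_eq_affineSpan {n : ℕ} (c : Set (Fin n → ℝ))
    (hc : c.Nonempty) (hdual : (dualSet c).Nonempty) :
    dualSet (dualSet c) = (affineSpan ℝ c : Set (Fin n → ℝ)) := by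
  obtain ⟨π₀, hπ₀⟩ := hdual
  obtain ⟨ρ₀, hρ₀⟩ := hc
  apply Set.Subset.antisymm
  · intro ρ hρ
    -- Step 1: ρ ∈ linear span of c
    have hspan : ρ ∈ Submodule.span ℝ c := by
      by_contra hx
      obtain ⟨f, hf0, hfbot⟩ :=
        (Submodule.span ℝ c).exists_dual_map_eq_bot_of_notMem hx inferInstance
      have hker : ∀ σ ∈ c, f σ = 0 := by
        intro σ hσ
        have hm : f σ ∈ (Submodule.span ℝ c).map f :=
          ⟨σ, Submodule.subset_span hσ, rfl⟩
        rw [hfbot] at hm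
        simpa using hm
      set w : Fin n → ℝ := fun i => f (fun j => if i = j then 1 else 0) with hw
      have hfsum : ∀ x : Fin n → ℝ, f x = ∑ i, x i * w i := by
        intro x
        rw [LinearMap.pi_apply_eq_sum_univ f x]
        exact Finset.sum_congr rfl fun i _ => by rw [smul_eq_mul]
      have hmem : (π₀ + w) ∈ dualSet c := by
        intro σ hσ
        have h1 := hπ₀ σ hσ
        have h2 := hker σ hσ
        rw [hfsum] at h2
        have : ∑ i, (π₀ + w) i * σ i
            = (∑ i, π₀ i * σ i) + ∑ i, σ i * w i := by
          rw [← Finset.sum_add_distrib]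
          exact Finset.sum_congr rfl fun i _ => by simp [Pi.add_apply]; ring
        rw [this, h1, h2, add_zero]
      have h1 := hρ _ hmem
      have h0 := hρ _ hπ₀
      have hsplit : ∑ i, ρ i * (π₀ + w) i
          = (∑ i, ρ i * π₀ i) + ∑ i, ρ i * w i := by
        rw [← Finset.sum_add_distrib]
        exact Finset.sum_congr rfl fun i _ => by simp [Pi.add_apply]; ring
      rw [hsplit, h0] at h1
      have : f ρ = 0 := by rw [hfsum]; linarith
      exact hf0 this
    -- Step 2: convert to affine span membership
    obtain ⟨l, hlsupp, hlsum⟩ := Submodule.mem_span_set.mp hspan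
    have hρeq : ρ = ∑ σ ∈ l.support, l σ • σ := by
      rw [← hlsum]; rfl
    have hρi : ∀ i, ρ i = ∑ σ ∈ l.support, l σ * σ i := by
      intro i; rw [hρeq]; simp
    have hcoef : ∑ σ ∈ l.support, l σ = 1 := by
      have h0 := hρ _ hπ₀
      calc ∑ σ ∈ l.support, l σ
          = ∑ σ ∈ l.support, l σ * ∑ i, π₀ i * σ i := by
            refine Finset.sum_congr rfl fun σ hσ => ?_
            rw [hπ₀ σ (hlsupp hσ), mul_one]
        _ = ∑ σ ∈ l.support, ∑ i, l σ * (π₀ i * σ i) := by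
            exact Finset.sum_congr rfl fun σ _ => Finset.mul_sum _ _ _
        _ = ∑ i, ρ i * π₀ i := by
            rw [Finset.sum_comm]
            refine Finset.sum_congr rfl fun i _ => ?_
            rw [hρi i, Finset.sum_mul]
            exact Finset.sum_congr rfl fun σ _ => by ring
        _ = 1 := h0
    have hdir : ρ - ρ₀ ∈ vectorSpan ℝ c := by
      have heq : ρ - ρ₀ = ∑ σ ∈ l.support, l σ • (σ - ρ₀) := by
        have : ∑ σ ∈ l.support, l σ • (σ - ρ₀)
            = (∑ σ ∈ l.support, l σ • σ) - (∑ σ ∈ l.support, l σ) • ρ₀ := by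
          rw [Finset.sum_smul, ← Finset.sum_sub_distrib]
          exact Finset.sum_congr rfl fun σ _ => by rw [smul_sub]
        rw [this, hcoef, one_smul, ← hρeq]
      rw [heq]
      refine Submodule.sum_smul_mem _ _ fun σ hσ => ?_
      exact vsub_mem_vectorSpan ℝ (hlsupp hσ) hρ₀
    have hρ₀mem : ρ₀ ∈ affineSpan ℝ c := mem_affineSpan ℝ hρ₀
    have : (ρ - ρ₀) +ᵥ ρ₀ ∈ affineSpan ℝ c := by
      refine AffineSubspace.vadd_mem_of_mem_direction ?_ hρ₀mem
      rw [direction_affineSpan]; exact hdir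
    simpa using this
  · -- affineSpan c ⊆ dualSet (dualSet c)
    have hsub : c ⊆ dualSet (dualSet c) := by
      intro σ hσ π hπ
      have := hπ σ hσ
      rw [← this]
      exact Finset.sum_congr rfl fun i _ => mul_comm _ _
    let S : AffineSubspace ℝ (Fin n → ℝ) :=
      { carrier := dualSet (dualSet c)
        smul_vsub_vadd_mem' := by
          intro t p₁ p₂ p₃ hp₁ hp₂ hp₃ π hπ
          have h1 := hp₁ π hπ
          have h2 := hp₂ π hπ
          have h3 := hp₃ π hπ
          have : ∑ i, (t • (p₁ -ᵥ p₂) +ᵥ p₃) i * π i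
              = t * (∑ i, p₁ i * π i) - t * (∑ i, p₂ i * π i)
                + ∑ i, p₃ i * π i := by
            rw [Finset.mul_sum, Finset.mul_sum, ← Finset.sum_sub_distrib,
              ← Finset.sum_add_distrib]
            refine Finset.sum_congr rfl fun i _ => ?_
            show (t * (p₁ i - p₂ i) + p₃ i) * π i = _
            ring
          rw [this, h1, h2, h3]; ring }
    have : affineSpan ℝ c ≤ S := affineSpan_le.mpr hsub
    exact this
end

section
/- Set-compatibility is detected by intersection: let c, c' ⊆ ℝ^n (n ≥ 1), and suppose μ, θ, μ', θ' : ℝ are such that μ • 𝟙 ∈ c, θ • 𝟙 ∈ c*, μ' • 𝟙 ∈ c', θ' • 𝟙 ∈ c'*, where 𝟙 is the all-ones vector and c* := {π | ∀ ρ ∈ c, ∑ i, π i * ρ i = 1}. Then c ∩ c' is nonempty if and only if θ = θ' (equivalently, iff μ = μ'). -/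
open Finset

theorem set_compatible_iff_inter_nonempty {n : ℕ} (hn : 1 ≤ n)
    (c c' : Set (Fin n → ℝ)) (μ θ μ' θ' : ℝ)
    (hμ : (fun _ => μ) ∈ c) (hθ : (fun _ => θ) ∈ dualSet c)
    (hμ' : (fun _ => μ') ∈ c') (hθ' : (fun _ => θ') ∈ dualSet c') :
    ((c ∩ c').Nonempty ↔ θ = θ') ∧ ((c ∩ c').Nonempty ↔ μ = μ') := by
  have hnθμ : (n : ℝ) * (θ * μ) = 1 := by
    have := hθ _ hμ
    simpa [Finset.sum_const, Finset.card_univ, mul_comm] using this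
  have hnθ'μ' : (n : ℝ) * (θ' * μ') = 1 := by
    have := hθ' _ hμ'
    simpa [Finset.sum_const, Finset.card_univ, mul_comm] using this
  have hθ0 : θ ≠ 0 := by
    rintro rfl; simp at hnθμ
  have hθ'0 : θ' ≠ 0 := by
    rintro rfl; simp at hnθ'μ'
  -- θ = θ' ↔ μ = μ'
  have key : θ = θ' ↔ μ = μ' := by
    constructor
    · rintro rfl
      have h : (n : ℝ) * θ * μ = (n : ℝ) * θ * μ' := by
        rw [mul_assoc, mul_assoc, hnθμ, hnθ'μ']
      have hne : (n : ℝ) * θ ≠ 0 := by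
        have : (n : ℝ) ≠ 0 := by positivity
        exact mul_ne_zero this hθ0
      exact mul_left_cancel₀ hne h
    · rintro rfl
      have hμ0 : μ ≠ 0 := by
        rintro rfl; simp at hnθμ
      have h : (n : ℝ) * μ * θ = (n : ℝ) * μ * θ' := by
        rw [mul_assoc, mul_assoc, mul_comm μ θ, mul_comm μ θ', hnθμ, hnθ'μ']
      have hne : (n : ℝ) * μ ≠ 0 := by
        have : (n : ℝ) ≠ 0 := by positivity
        exact mul_ne_zero this hμ0
      exact mul_left_cancel₀ hne h
  have main : (c ∩ c').Nonempty ↔ θ = θ' := by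
    constructor
    · rintro ⟨ρ, hρc, hρc'⟩
      have h1 : θ * ∑ i, ρ i = 1 := by
        have := hθ _ hρc
        simpa [Finset.mul_sum] using this
      have h2 : θ' * ∑ i, ρ i = 1 := by
        have := hθ' _ hρc'
        simpa [Finset.mul_sum] using this
      have hS : (∑ i, ρ i) ≠ 0 := by
        rintro h; rw [h, mul_zero] at h1; simp at h1
      have := h1.trans h2.symm
      exact mul_right_cancel₀ hS this
    · intro h
      have hμμ' : μ = μ' := key.mp h
      exact ⟨fun _ => μ, hμ, hμμ' ▸ hμ'⟩
  exact ⟨main, main.trans key⟩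
end
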